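/- For real symmetric positive definite n×n matrices A and B, the squared Bures-Wasserstein distance satisfies ρ²(A,B) = Tr(A) + Tr(B) − 2·max{Tr(√A·√B·U) : U ∈ O(n)}. -/

import Mathlib

/-!
Write `M = √A √B`, so that `M Mᵀ = √A B √A` and `P = √(√A B √A)` satisfies `P² = M Mᵀ`.
For invertible `M` this gives the polar decomposition `M = P W` with `W = P⁻¹ M` orthogonal.
Then `Tr(M U) = Tr(P (W U))` for orthogonal `U`, and `Tr(P V) ≤ Tr(P)` for every orthogonal `V`:
diagonalising `P`, the left side is `∑ λᵢ Vᵢᵢ` with `λᵢ ≥ 0` and `|Vᵢᵢ| ≤ 1`.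
The maximum `Tr(P)` is attained at `U = Wᵀ`.
-/

open Matrix BigOperators

open Classical in
noncomputable def msqrt {n : ℕ} (M : Matrix (Fin n) (Fin n) ℝ) : Matrix (Fin n) (Fin n) ℝ :=
  if h : M.PosSemidef then (h.1.eigenvectorUnitary : Matrix (Fin n) (Fin n) ℝ) *
    diagonal ((↑) ∘ (√·) ∘ h.1.eigenvalues) * (star h.1.eigenvectorUnitary : Matrix (Fin n) (Fin n) ℝ) else 0

noncomputable def fnorm {n : ℕ} (A : Matrix (Fin n) (Fin n) ℝ) : ℝ :=
  Real.sqrt (∑ i, ∑ j, (A i j) ^ 2)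

open scoped MatrixOrder

section SquareRoot

variable {n : ℕ} {M : Matrix (Fin n) (Fin n) ℝ}

theorem msqrt_eq_sqrt (h : M.PosSemidef) : msqrt M = CFC.sqrt M := by
  rw [CFC.sqrt_eq_real_sqrt M h.nonneg, cfcₙ_eq_cfc, h.1.cfc_eq, msqrt, dif_pos h]
  rfl

theorem posSemidef_msqrt (h : M.PosSemidef) : (msqrt M).PosSemidef := by
  rw [msqrt_eq_sqrt h]
  exact (CFC.sqrt_nonneg M).posSemidef

theorem msqrt_mul_self (h : M.PosSemidef) : msqrt M * msqrt M = M := by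
  rw [msqrt_eq_sqrt h]
  exact CFC.sqrt_mul_sqrt_self M h.nonneg

theorem isUnit_det_msqrt (h : M.PosDef) : IsUnit (msqrt M).det := by
  have hdet := congrArg det (msqrt_mul_self h.posSemidef)
  rw [det_mul] at hdet
  exact isUnit_of_mul_isUnit_left (hdet ▸ h.det_pos.ne'.isUnit)

end SquareRoot

section Orthogonal

variable {ι : Type*} [Fintype ι] [DecidableEq ι]

theorem Matrix.PosSemidef.trace_mul_le_trace {P W : Matrix ι ι ℝ} (hP : P.PosSemidef)
    (hW : W ∈ orthogonalGroup ι ℝ) : (P * W).trace ≤ P.trace := by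
  set Q : Matrix ι ι ℝ := (hP.1.eigenvectorUnitary : Matrix ι ι ℝ)
  set V := star Q * W * Q
  have hV : V ∈ orthogonalGroup ι ℝ :=
    Submonoid.mul_mem _ (Submonoid.mul_mem _ (Unitary.star_mem hP.1.eigenvectorUnitary.2) hW)
      hP.1.eigenvectorUnitary.2
  have hspec : P = Q * diagonal hP.1.eigenvalues * star Q := by
    simpa [Unitary.conjStarAlgAut_apply] using hP.1.spectral_theorem
  have hPW : (P * W).trace = ∑ i, hP.1.eigenvalues i * V i i := by
    conv_lhs => rw [hspec, mul_assoc, mul_assoc, trace_mul_comm]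
    simp [trace, diagonal_mul, V, mul_assoc]
  rw [hPW, hP.1.trace_eq_sum_eigenvalues]
  gcongr with i
  refine mul_le_of_le_one_right (hP.eigenvalues_nonneg i) ?_
  exact (le_abs_self _).trans (entry_norm_bound_of_unitary hV i i)

theorem Matrix.exists_polar_decomposition {M P : Matrix ι ι ℝ} (hM : IsUnit M.det)
    (hP : P.IsHermitian) (hPM : P * P = M * Mᵀ) :
    ∃ W ∈ orthogonalGroup ι ℝ, M = P * W := by
  have hPt : Pᵀ = P := (isHermitian_iff_isSymm.1 hP).eq
  have hPdet : IsUnit P.det := by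
    have h := congrArg det hPM
    rw [det_mul, det_mul, det_transpose] at h
    exact isUnit_of_mul_isUnit_left (h ▸ hM.mul hM)
  refine ⟨P⁻¹ * M, (mem_orthogonalGroup_iff ι ℝ).2 ?_, ?_⟩
  · rw [transpose_mul, transpose_nonsing_inv, hPt]
    calc P⁻¹ * M * (Mᵀ * P⁻¹) = P⁻¹ * (P * P) * P⁻¹ := by rw [hPM]; noncomm_ring
      _ = 1 := by rw [← mul_assoc, nonsing_inv_mul _ hPdet, one_mul, mul_nonsing_inv _ hPdet]
  · rw [← mul_assoc, mul_nonsing_inv _ hPdet, one_mul]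

theorem Matrix.isGreatest_trace_mul_orthogonal {M P : Matrix ι ι ℝ} (hM : IsUnit M.det)
    (hP : P.PosSemidef) (hPM : P * P = M * Mᵀ) :
    IsGreatest {t : ℝ | ∃ U : Matrix ι ι ℝ, Uᵀ * U = 1 ∧ t = (M * U).trace} P.trace := by
  obtain ⟨W, hW, rfl⟩ := exists_polar_decomposition hM hP.1 hPM
  refine ⟨⟨Wᵀ, ?_, ?_⟩, ?_⟩
  · rw [transpose_transpose, ← mem_orthogonalGroup_iff ι ℝ]
    exact hW
  · rw [mul_assoc, (mem_orthogonalGroup_iff ι ℝ).1 hW, mul_one]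
  · rintro t ⟨U, hU, rfl⟩
    rw [mul_assoc]
    exact hP.trace_mul_le_trace (Submonoid.mul_mem _ hW ((mem_orthogonalGroup_iff' ι ℝ).2 hU))

end Orthogonal

theorem stmt_14 {n : ℕ} (A B : Matrix (Fin n) (Fin n) ℝ)
    (hA : A.PosDef) (hB : B.PosDef) :
    ∃ m : ℝ, IsGreatest {t : ℝ | ∃ U : Matrix (Fin n) (Fin n) ℝ,
        Uᵀ * U = 1 ∧ t = (msqrt A * msqrt B * U).trace} m ∧
      A.trace + B.trace - 2 * (msqrt (msqrt A * B * msqrt A)).trace =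
        A.trace + B.trace - 2 * m := by
  have hsA : (msqrt A)ᵀ = msqrt A :=
    (isHermitian_iff_isSymm.1 (posSemidef_msqrt hA.posSemidef).1).eq
  have hsB : (msqrt B)ᵀ = msqrt B :=
    (isHermitian_iff_isSymm.1 (posSemidef_msqrt hB.posSemidef).1).eq
  have hC : (msqrt A * B * msqrt A).PosSemidef := by
    simpa [conjTranspose_eq_transpose_of_trivial, hsA] using
      hB.posSemidef.conjTranspose_mul_mul_same (msqrt A)
  refine ⟨_, isGreatest_trace_mul_orthogonal ?_ (posSemidef_msqrt hC) ?_, rfl⟩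
  · rw [det_mul]
    exact (isUnit_det_msqrt hA).mul (isUnit_det_msqrt hB)
  · rw [msqrt_mul_self hC, transpose_mul, hsA, hsB, ← mul_assoc,
      mul_assoc (msqrt A) (msqrt B), msqrt_mul_self hB.posSemidef]
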